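/- arXiv:2311.04200 — 4 statements merged into one kernel-verified Lean document; each statement's English description precedes it below -/
import Mathlib

section
/- Let F(v1,v2,v3) = (1/2)·v1²·v3 + (1/2)·v1·v2² − v2⁴/24 + v2·e^{v3}, defined on ℝ³, and let η be the 3×3 matrix with entries η_{αβ} = δ_{α+β,4} for α=1,3 and η_{22}=1 (i.e. η = [[0,0,1],[0,1,0],[1,0,0]]), so that η⁻¹ = η. Then F satisfies the WDVV associativity equations: for all α,β,γ,δ ∈ {1,2,3}, ∑_{ρ,σ} F_{αβρ} η^{ρσ} F_{σγδ} = ∑_{ρ,σ} F_{δβρ} η^{ρσ} F_{σγα}, where F_{αβγ} denotes the third partial derivative ∂³F/∂v^α∂v^β∂v^γ. -/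
/-!
Write `C β` for the symmetric matrix `(F_{αβγ})_{α,γ}`. The two sides of the WDVV equation are
the `(α, δ)` and `(δ, α)` entries of `C β * η * C γ`, and since `η` and the `C β` are symmetric,
this product is symmetric exactly when `C β * η * C γ = C γ * η * C β`. For the given potential,
`C 0 = η` with `η * η = 1`, and `C 1 * η * C 2 = exp (v 2) • η = C 2 * η * C 1`.
-/

/-- Partial derivative of a function of three real variables along coordinate `i`. -/
noncomputable def pd (i : Fin 3) (f : (Fin 3 → ℝ) → ℝ) (x : Fin 3 → ℝ) : ℝ :=
  deriv (fun t => f (Function.update x i t)) (x i)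

section PartialDerivative

variable {f g : (Fin 3 → ℝ) → ℝ} (i : Fin 3)

theorem pd_eq_fderiv {x : Fin 3 → ℝ} (hf : DifferentiableAt ℝ f x) :
    pd i f x = fderiv ℝ f x (Pi.single i 1) := by
  have hf' : DifferentiableAt ℝ f (Function.update x i (x i)) := by
    rwa [Function.update_eq_self]
  have h := (hf'.hasFDerivAt.comp_hasDerivAt (x i) (hasDerivAt_update x i (x i))).deriv
  rwa [Function.update_eq_self] at h

theorem pd_eq_fderiv_fun (hf : Differentiable ℝ f) :
    pd i f = fun x => fderiv ℝ f x (Pi.single i 1) :=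
  funext fun _ => pd_eq_fderiv i (hf _)

theorem pd_const (c : ℝ) : pd i (fun _ => c) = fun _ => 0 := by
  funext x
  simp [pd]

theorem pd_apply (j : Fin 3) : pd i (fun y => y j) = fun _ => if j = i then 1 else 0 := by
  rw [pd_eq_fderiv_fun i (differentiable_apply j)]
  funext x
  simp [fderiv_apply, Pi.single_apply]

theorem pd_add (hf : Differentiable ℝ f) (hg : Differentiable ℝ g) :
    pd i (fun y => f y + g y) = fun y => pd i f y + pd i g y := by
  rw [pd_eq_fderiv_fun i (f := fun y => f y + g y) (by fun_prop), pd_eq_fderiv_fun i hf,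
    pd_eq_fderiv_fun i hg]
  funext x
  rw [fderiv_fun_add (hf x) (hg x)]
  rfl

theorem pd_sub (hf : Differentiable ℝ f) (hg : Differentiable ℝ g) :
    pd i (fun y => f y - g y) = fun y => pd i f y - pd i g y := by
  rw [pd_eq_fderiv_fun i (f := fun y => f y - g y) (by fun_prop), pd_eq_fderiv_fun i hf,
    pd_eq_fderiv_fun i hg]
  funext x
  rw [fderiv_fun_sub (hf x) (hg x)]
  rfl

theorem pd_mul (hf : Differentiable ℝ f) (hg : Differentiable ℝ g) :
    pd i (fun y => f y * g y) = fun y => pd i f y * g y + f y * pd i g y := by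
  rw [pd_eq_fderiv_fun i (f := fun y => f y * g y) (by fun_prop), pd_eq_fderiv_fun i hf,
    pd_eq_fderiv_fun i hg]
  funext x
  rw [fderiv_fun_mul (hf x) (hg x)]
  simp only [_root_.add_apply, _root_.smul_apply, smul_eq_mul]
  ring

theorem pd_pow (hf : Differentiable ℝ f) (n : ℕ) :
    pd i (fun y => f y ^ n) = fun y => n * f y ^ (n - 1) * pd i f y := by
  rw [pd_eq_fderiv_fun i (f := fun y => f y ^ n) (by fun_prop), pd_eq_fderiv_fun i hf]
  funext x
  rw [fderiv_fun_pow n (hf x)]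
  simp

theorem pd_exp (hf : Differentiable ℝ f) :
    pd i (fun y => Real.exp (f y)) = fun y => Real.exp (f y) * pd i f y := by
  rw [pd_eq_fderiv_fun i (f := fun y => Real.exp (f y)) (by fun_prop), pd_eq_fderiv_fun i hf]
  funext x
  rw [fderiv_exp (hf x)]
  rfl

end PartialDerivative

theorem Matrix.mul_mul_apply_eq_sum_sum {ι R : Type*} [Fintype ι] [CommSemiring R]
    (A B C : Matrix ι ι R) (i j : ι) :
    (A * B * C) i j = ∑ ρ, ∑ σ, A i ρ * B ρ σ * C σ j := by
  simp only [Matrix.mul_apply, Finset.sum_mul]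
  exact Finset.sum_comm

theorem Matrix.IsSymm.mul_mul_of_commute {ι R : Type*} [Fintype ι] [CommSemiring R]
    {η A B : Matrix ι ι R} (hA : A.IsSymm) (hη : η.IsSymm) (hB : B.IsSymm)
    (hcomm : A * η * B = B * η * A) : (A * η * B).IsSymm := by
  rw [Matrix.IsSymm, Matrix.transpose_mul, Matrix.transpose_mul, hη.eq, hA.eq, hB.eq,
    ← Matrix.mul_assoc, hcomm]

namespace P1Orbifold

noncomputable def potential : (Fin 3 → ℝ) → ℝ := fun v =>
  (1/2) * (v 0)^2 * (v 2) + (1/2) * (v 0) * (v 1)^2 - (v 1)^4 / 24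
    + (v 1) * Real.exp (v 2)

def gram : Matrix (Fin 3) (Fin 3) ℝ := !![0, 0, 1; 0, 1, 0; 1, 0, 0]

noncomputable def thirdDerivMatrix (x : Fin 3 → ℝ) : Fin 3 → Matrix (Fin 3) (Fin 3) ℝ :=
  ![!![0, 0, 1; 0, 1, 0; 1, 0, 0],
    !![0, 1, 0; 1, -x 1, 0; 0, 0, Real.exp (x 2)],
    !![1, 0, 0; 0, 0, Real.exp (x 2); 0, Real.exp (x 2), x 1 * Real.exp (x 2)]]

theorem pd_pd_pd_potential (a b c : Fin 3) (x : Fin 3 → ℝ) :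
    pd a (pd b (pd c potential)) x = thirdDerivMatrix x b a c := by
  unfold potential
  simp (disch := fun_prop) only [div_eq_mul_inv, pd_add, pd_sub, pd_mul, pd_pow, pd_exp,
    pd_const, pd_apply]
  fin_cases a <;> fin_cases b <;> fin_cases c <;> simp [thirdDerivMatrix]
  ring

theorem isSymm_gram : gram.IsSymm :=
  Matrix.IsSymm.ext fun i j => by fin_cases i <;> fin_cases j <;> rfl

theorem isSymm_thirdDerivMatrix (x : Fin 3 → ℝ) (β : Fin 3) : (thirdDerivMatrix x β).IsSymm :=
  Matrix.IsSymm.ext fun i j => by fin_cases β <;> fin_cases i <;> fin_cases j <;> rfl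

theorem thirdDerivMatrix_commute (x : Fin 3 → ℝ) (β γ : Fin 3) :
    thirdDerivMatrix x β * gram * thirdDerivMatrix x γ
      = thirdDerivMatrix x γ * gram * thirdDerivMatrix x β := by
  fin_cases β <;> fin_cases γ <;> simp [thirdDerivMatrix, gram] <;> ring_nf

end P1Orbifold

open P1Orbifold in
theorem wdvv_P1_orbifold :
    let F : (Fin 3 → ℝ) → ℝ := fun v =>
      (1/2) * (v 0)^2 * (v 2) + (1/2) * (v 0) * (v 1)^2 - (v 1)^4 / 24
        + (v 1) * Real.exp (v 2)
    let η : Fin 3 → Fin 3 → ℝ := ![![0,0,1], ![0,1,0], ![1,0,0]]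
    ∀ (x : Fin 3 → ℝ) (α β γ δ : Fin 3),
      ∑ ρ : Fin 3, ∑ σ : Fin 3,
          pd α (pd β (pd ρ F)) x * η ρ σ * pd σ (pd γ (pd δ F)) x
        = ∑ ρ : Fin 3, ∑ σ : Fin 3,
          pd δ (pd β (pd ρ F)) x * η ρ σ * pd σ (pd γ (pd α F)) x := by
  intro F η x α β γ δ
  change ∑ ρ, ∑ σ, pd α (pd β (pd ρ potential)) x * gram ρ σ * pd σ (pd γ (pd δ potential)) x
    = ∑ ρ, ∑ σ, pd δ (pd β (pd ρ potential)) x * gram ρ σ * pd σ (pd γ (pd α potential)) x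
  simp only [pd_pd_pd_potential, ← Matrix.mul_mul_apply_eq_sum_sum]
  exact ((isSymm_thirdDerivMatrix x β).mul_mul_of_commute isSymm_gram
    (isSymm_thirdDerivMatrix x γ) (thirdDerivMatrix_commute x β γ)).apply δ α
end

section
/- Let F(w1,w2,w3) = w2³/6 + w1·w2·w3 + (1/6)·w1·w3³ + (1/2)·w1²·log(w1) − (3/4)·w1², defined on the domain {w1 > 0} ⊂ ℝ³, and let η = [[0,0,1],[0,1,0],[1,0,0]]. Then F satisfies the WDVV associativity equations: for all α,β,γ,δ ∈ {1,2,3}, ∑_{ρ,σ} F_{αβρ} η^{ρσ} F_{σγδ} = ∑_{ρ,σ} F_{δβρ} η^{ρσ} F_{σγα}. -/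
open Set

theorem eqOn_pd_of_eqOn {f g : (Fin 3 → ℝ) → ℝ} {U : Set (Fin 3 → ℝ)} (hfg : EqOn f g U)
    (hU : IsOpen U) (i : Fin 3) : EqOn (pd i f) (pd i g) U := by
  intro x hx
  apply Filter.EventuallyEq.deriv_eq
  have hcont : Continuous (Function.update x i) := continuous_const.update i continuous_id
  filter_upwards [hcont.continuousAt.preimage_mem_nhds (hU.mem_nhds (by simpa using hx))]
    with t ht using hfg ht

namespace OrbifoldS2

noncomputable def potential (w : Fin 3 → ℝ) : ℝ :=
  (w 1)^3 / 6 + (w 0) * (w 1) * (w 2) + (1/6) * (w 0) * (w 2)^3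
    + (1/2) * (w 0)^2 * Real.log (w 0) - (3/4) * (w 0)^2

noncomputable def gradient (w : Fin 3 → ℝ) : Fin 3 → ℝ :=
  ![w 1 * w 2 + (w 2)^3 / 6 + w 0 * Real.log (w 0) - w 0,
    (w 1)^2 / 2 + w 0 * w 2,
    w 0 * w 1 + w 0 * (w 2)^2 / 2]

noncomputable def hessian (w : Fin 3 → ℝ) : Fin 3 → Fin 3 → ℝ :=
  ![![Real.log (w 0), w 2, w 1 + (w 2)^2 / 2],
    ![w 2, w 1, w 0],
    ![w 1 + (w 2)^2 / 2, w 0, w 0 * w 2]]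

noncomputable def thirdDeriv (w : Fin 3 → ℝ) : Fin 3 → Fin 3 → Fin 3 → ℝ :=
  ![![![(w 0)⁻¹, 0, 0], ![0, 0, 1], ![0, 1, w 2]],
    ![![0, 0, 1], ![0, 1, 0], ![1, 0, 0]],
    ![![0, 1, w 2], ![1, 0, 0], ![w 2, 0, w 0]]]

def eta : Fin 3 → Fin 3 → ℝ := ![![0, 0, 1], ![0, 1, 0], ![1, 0, 0]]

variable {x : Fin 3 → ℝ}

theorem pd_potential (hx : x 0 ≠ 0) (ρ : Fin 3) : pd ρ potential x = gradient x ρ := by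
  fin_cases ρ <;>
    simp (disch := first | decide | fun_prop (disch := assumption)) [pd, potential, gradient] <;>
    field_simp <;> ring

theorem pd_gradient (hx : x 0 ≠ 0) (β ρ : Fin 3) :
    pd β (fun w => gradient w ρ) x = hessian x β ρ := by
  fin_cases β <;> fin_cases ρ <;>
    simp (disch := first | decide | fun_prop (disch := assumption)) [pd, gradient, hessian] <;>
    field_simp <;> ring

theorem pd_hessian (α β ρ : Fin 3) :
    pd α (fun w => hessian w β ρ) x = thirdDeriv x α β ρ := by
  fin_cases α <;> fin_cases β <;> fin_cases ρ <;> simp [pd, hessian, thirdDeriv]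

theorem pd_pd_pd_potential (hx : x 0 ≠ 0) (α β ρ : Fin 3) :
    pd α (pd β (pd ρ potential)) x = thirdDeriv x α β ρ := by
  have hU : IsOpen {w : Fin 3 → ℝ | w 0 ≠ 0} := isOpen_ne_fun (continuous_apply 0) continuous_const
  have hgrad : EqOn (pd ρ potential) (fun w => gradient w ρ) {w | w 0 ≠ 0} :=
    fun w hw => pd_potential hw ρ
  have hhess : EqOn (pd β (pd ρ potential)) (fun w => hessian w β ρ) {w | w 0 ≠ 0} :=
    fun w hw => (eqOn_pd_of_eqOn hgrad hU β hw).trans (pd_gradient hw β ρ)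
  exact (eqOn_pd_of_eqOn hhess hU α hx).trans (pd_hessian α β ρ)

theorem sum_mul_eta_mul (a b : Fin 3 → ℝ) :
    ∑ ρ, ∑ σ, a ρ * eta ρ σ * b σ = a 0 * b 2 + a 1 * b 1 + a 2 * b 0 := by
  simp [Fin.sum_univ_three, eta]

theorem wdvv_thirdDeriv (hx : x 0 ≠ 0) (α β γ δ : Fin 3) :
    ∑ ρ, ∑ σ, thirdDeriv x α β ρ * eta ρ σ * thirdDeriv x σ γ δ
      = ∑ ρ, ∑ σ, thirdDeriv x δ β ρ * eta ρ σ * thirdDeriv x σ γ α := by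
  simp only [sum_mul_eta_mul]
  fin_cases α <;> fin_cases β <;> fin_cases γ <;> fin_cases δ <;> simp [thirdDeriv] <;> field_simp

end OrbifoldS2

theorem wdvv_S2_P1_orbifold :
    let F : (Fin 3 → ℝ) → ℝ := fun w =>
      (w 1)^3 / 6 + (w 0) * (w 1) * (w 2) + (1/6) * (w 0) * (w 2)^3
        + (1/2) * (w 0)^2 * Real.log (w 0) - (3/4) * (w 0)^2
    let η : Fin 3 → Fin 3 → ℝ := ![![0,0,1], ![0,1,0], ![1,0,0]]
    ∀ (x : Fin 3 → ℝ), x 0 > 0 → ∀ (α β γ δ : Fin 3),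
      ∑ ρ : Fin 3, ∑ σ : Fin 3,
          pd α (pd β (pd ρ F)) x * η ρ σ * pd σ (pd γ (pd δ F)) x
        = ∑ ρ : Fin 3, ∑ σ : Fin 3,
          pd δ (pd β (pd ρ F)) x * η ρ σ * pd σ (pd γ (pd α F)) x := by
  intro F η x hx α β γ δ
  have hthird : ∀ a b r, pd a (pd b (pd r F)) x = OrbifoldS2.thirdDeriv x a b r :=
    OrbifoldS2.pd_pd_pd_potential hx.ne'
  simp only [hthird]
  exact OrbifoldS2.wdvv_thirdDeriv hx.ne' α β γ δ
end

section
/- Let F(v1,v2) = (1/2)·v1²·v2 + v2⁴/72 on ℝ², and let G(u1,u2) = (1/2)·u2²·u1 + (4/5)·√(2/3)·u1^{5/2} on {u1 > 0}. Define the change of variables u1 = v2²/6, u2 = v1 (valid for v2 > 0). Then all corresponding second partial derivatives agree: ∂²G/∂u1² evaluated at (v2²/6, v1) equals ∂²F/∂v1² = v2; ∂²G/∂u1∂u2 equals ∂²F/∂v1∂v2 = v1; and ∂²G/∂u2² equals ∂²F/∂v2² = v2²/6. -/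
/-!
The only non-polynomial second derivative is `∂²G/∂u1² = 3 √(2 u1 / 3)`, and under
`u1 = v2² / 6` this is `√(v2²) = v2` because `v2 > 0`; the other second derivatives of `F` and `G`
are monomials that match by inspection.
-/

open Real

theorem deriv_deriv_eq_of_hasDerivAt {f f' : ℝ → ℝ} {f'' x : ℝ}
    (hf : ∀ y, HasDerivAt f (f' y) y) (hf' : HasDerivAt f' f'' x) :
    deriv (deriv f) x = f'' := by
  rw [funext fun y => (hf y).deriv]
  exact hf'.deriv

theorem deriv_deriv_snd_eq_of_hasDerivAt {F : ℝ → ℝ → ℝ} {g : ℝ → ℝ} {a b c : ℝ}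
    (hF : ∀ x, HasDerivAt (F x) (g x) b) (hg : HasDerivAt g c a) :
    deriv (fun x => deriv (F x) b) a = c := by
  rw [funext fun x => (hF x).deriv]
  exact hg.deriv

noncomputable def potentialA2 (a b : ℝ) : ℝ := 1/2 * a^2 * b + b^4 / 72

noncomputable def legendrePotentialA2 (a b : ℝ) : ℝ :=
  1/2 * b^2 * a + 4/5 * √(2/3) * a ^ ((5:ℝ)/2)

section potentialA2

variable (a b : ℝ)

theorem hasDerivAt_potentialA2_fst : HasDerivAt (potentialA2 · b) (a * b) a :=
  ((((hasDerivAt_pow 2 a).const_mul (1/2)).mul_const b).add_const (b^4 / 72)).congr_deriv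
    (by ring)

theorem hasDerivAt_potentialA2_snd :
    HasDerivAt (potentialA2 a) (a^2 / 2 + b^3 / 18) b :=
  ((hasDerivAt_const_mul (1/2 * a^2)).add ((hasDerivAt_pow 4 b).div_const 72)).congr_deriv
    (by ring)

theorem deriv_deriv_potentialA2_fst : deriv (deriv (potentialA2 · b)) a = b :=
  deriv_deriv_eq_of_hasDerivAt (hasDerivAt_potentialA2_fst · b) (hasDerivAt_mul_const b)

theorem deriv_deriv_potentialA2_snd_fst :
    deriv (fun x => deriv (potentialA2 x) b) a = a :=
  deriv_deriv_snd_eq_of_hasDerivAt (hasDerivAt_potentialA2_snd · b)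
    ((((hasDerivAt_pow 2 a).div_const 2).add_const (b^3 / 18)).congr_deriv (by ring))

theorem deriv_deriv_potentialA2_snd : deriv (deriv (potentialA2 a)) b = b^2 / 6 :=
  deriv_deriv_eq_of_hasDerivAt (hasDerivAt_potentialA2_snd a)
    ((((hasDerivAt_pow 3 b).div_const 18).const_add (a^2 / 2)).congr_deriv (by ring))

end potentialA2

section legendrePotentialA2

variable (a b : ℝ)

theorem hasDerivAt_legendrePotentialA2_fst :
    HasDerivAt (legendrePotentialA2 · b) (b^2 / 2 + 2 * √(2/3) * a ^ ((3:ℝ)/2)) a :=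
  ((hasDerivAt_const_mul (1/2 * b^2)).add
    ((hasDerivAt_rpow_const (p := 5/2) (Or.inr (by norm_num))).const_mul
      (4/5 * √(2/3)))).congr_deriv (by norm_num; ring)

theorem hasDerivAt_legendrePotentialA2_snd :
    HasDerivAt (legendrePotentialA2 a) (a * b) b :=
  ((((hasDerivAt_pow 2 b).const_mul (1/2)).mul_const a).add_const
    (4/5 * √(2/3) * a ^ ((5:ℝ)/2))).congr_deriv (by ring)

theorem deriv_deriv_legendrePotentialA2_fst :
    deriv (deriv (legendrePotentialA2 · b)) a = 3 * √(2/3 * a) := by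
  refine deriv_deriv_eq_of_hasDerivAt (hasDerivAt_legendrePotentialA2_fst · b) ?_
  refine (((hasDerivAt_rpow_const (p := 3/2) (Or.inr (by norm_num))).const_mul
    (2 * √(2/3))).const_add (b^2 / 2)).congr_deriv ?_
  rw [sqrt_mul (by norm_num), sqrt_eq_rpow a]
  norm_num
  ring

theorem deriv_deriv_legendrePotentialA2_snd_fst :
    deriv (fun x => deriv (legendrePotentialA2 x) b) a = b :=
  deriv_deriv_snd_eq_of_hasDerivAt (hasDerivAt_legendrePotentialA2_snd · b)
    (hasDerivAt_mul_const b)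

theorem deriv_deriv_legendrePotentialA2_snd : deriv (deriv (legendrePotentialA2 a)) b = a :=
  deriv_deriv_eq_of_hasDerivAt (hasDerivAt_legendrePotentialA2_snd a) (hasDerivAt_const_mul a)

end legendrePotentialA2

theorem sqrt_two_thirds_mul_sq_div_six {v : ℝ} (hv : 0 ≤ v) : √(2/3 * (v^2 / 6)) = v / 3 := by
  rw [show 2/3 * (v^2 / 6) = (v / 3)^2 by ring, sqrt_sq (by positivity)]

theorem legendre_A2_second_derivatives (v1 v2 : ℝ) (h : v2 > 0) :
    let F : ℝ → ℝ → ℝ := fun a b => (1/2) * a^2 * b + b^4 / 72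
    let G : ℝ → ℝ → ℝ := fun a b =>
      (1/2) * b^2 * a + (4/5) * Real.sqrt (2/3) * a ^ ((5:ℝ)/2)
    let u1 : ℝ := v2^2 / 6
    let u2 : ℝ := v1
    (deriv (deriv (fun a => G a u2)) u1 = deriv (deriv (fun a => F a v2)) v1
      ∧ deriv (deriv (fun a => F a v2)) v1 = v2)
    ∧ (deriv (fun a => deriv (fun b => G a b) u2) u1
        = deriv (fun a => deriv (fun b => F a b) v2) v1
      ∧ deriv (fun a => deriv (fun b => F a b) v2) v1 = v1)
    ∧ (deriv (deriv (fun b => G u1 b)) u2 = deriv (deriv (fun b => F v1 b)) v2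
      ∧ deriv (deriv (fun b => F v1 b)) v2 = v2^2 / 6) := by
  intro F G u1 u2
  have hFaa : deriv (deriv (fun a => F a v2)) v1 = v2 := deriv_deriv_potentialA2_fst v1 v2
  have hFab : deriv (fun a => deriv (fun b => F a b) v2) v1 = v1 :=
    deriv_deriv_potentialA2_snd_fst v1 v2
  have hFbb : deriv (deriv (fun b => F v1 b)) v2 = v2^2 / 6 := deriv_deriv_potentialA2_snd v1 v2
  have hGaa : deriv (deriv (fun a => G a u2)) u1 = v2 :=
    (deriv_deriv_legendrePotentialA2_fst u1 u2).trans
      (by rw [sqrt_two_thirds_mul_sq_div_six h.le]; ring)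
  have hGab : deriv (fun a => deriv (fun b => G a b) u2) u1 = v1 :=
    deriv_deriv_legendrePotentialA2_snd_fst u1 u2
  have hGbb : deriv (deriv (fun b => G u1 b)) u2 = v2^2 / 6 :=
    deriv_deriv_legendrePotentialA2_snd u1 u2
  exact ⟨⟨hGaa.trans hFaa.symm, hFaa⟩, ⟨hGab.trans hFab.symm, hFab⟩, ⟨hGbb.trans hFbb.symm, hFbb⟩⟩
end

section
/- Let P(q) = 1 − 24·∑_{n≥1} σ(n)·qⁿ as a formal power series in q, where σ(n) is the sum of the positive divisors of n, and let D = q·d/dq be the formal differential operator. Then D³P = P·D²P − (3/2)·(DP)². -/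
open PowerSeries

/-- The operator D = q·d/dq on formal power series. -/
noncomputable def Dq (f : PowerSeries ℚ) : PowerSeries ℚ :=
  PowerSeries.X * PowerSeries.derivativeFun f

/-!
Write `P = 1 - 24 G` with `G = ∑ σ(n) qⁿ`. Since `D` is a derivation, the Chazy equation for `P`
is equivalent to `D³G = D²G - 24 G D²G + 36 (DG)²`, i.e. to the convolution identity
`12 ∑_{j+k=n} σ(j) σ(k) (j² + k² - 3jk) = n² (1 - n) σ(n)`.

Expanding `σ(j) σ(k)`, the left side is the sum of `F(a,b,x,y) = 12ab((ax)² + (by)² - 3axby)` over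
the positive solutions of `ax + by = n`. The maps `φ(a,b,x,y) = (a-b, b, x, x+y)` on `{a > b}` and
`φ(a,b,x,y) = (a, b-a, x+y, y)` on `{a < b}` are bijections onto `{x < y}` and `{x > y}`, and on
these pieces `F = H ∘ φ - H ∓ A` for explicit polynomials `H`, `A`, the `A`-terms cancelling under
`(a,b,x,y) ↦ (b,a,y,x)`. So the sum telescopes to the diagonals `a = b` and `x = y`, where it is
evaluated by power sums.
-/

open Finset ArithmeticFunction
open scoped ArithmeticFunction.sigma

namespace EisensteinChazy

def posSolutions (n : ℕ) : Finset (ℕ × ℕ × ℕ × ℕ) :=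
  (Icc 1 n ×ˢ Icc 1 n ×ˢ Icc 1 n ×ˢ Icc 1 n).filter fun s => s.1 * s.2.2.1 + s.2.1 * s.2.2.2 = n

lemma mem_posSolutions {n a b x y : ℕ} :
    (a, b, x, y) ∈ posSolutions n ↔ 0 < a ∧ 0 < b ∧ 0 < x ∧ 0 < y ∧ a * x + b * y = n := by
  simp only [posSolutions, mem_filter, mem_product, mem_Icc]
  constructor
  · rintro ⟨⟨⟨ha, -⟩, ⟨hb, -⟩, ⟨hx, -⟩, ⟨hy, -⟩⟩, h⟩
    exact ⟨ha, hb, hx, hy, h⟩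
  · rintro ⟨ha, hb, hx, hy, rfl⟩
    refine ⟨⟨⟨ha, ?_⟩, ⟨hb, ?_⟩, ⟨hx, ?_⟩, ⟨hy, ?_⟩⟩, rfl⟩ <;> nlinarith

section Bijections

variable {M : Type*} [AddCommMonoid M] (n : ℕ)

lemma sum_posSolutions_eq_sum_antidiagonal_divisors (g : ℕ → ℕ → ℕ → ℕ → M) :
    ∑ s ∈ posSolutions n, g s.1 s.2.1 (s.1 * s.2.2.1) (s.2.1 * s.2.2.2) =
      ∑ p ∈ antidiagonal n, ∑ a ∈ p.1.divisors, ∑ b ∈ p.2.divisors, g a b p.1 p.2 := by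
  rw [sum_congr rfl fun (p : ℕ × ℕ) _ =>
    (sum_product p.1.divisors p.2.divisors fun q => g q.1 q.2 p.1 p.2).symm, sum_sigma']
  refine sum_nbij' (fun ⟨a, b, x, y⟩ => ⟨(a * x, b * y), (a, b)⟩)
    (fun ⟨⟨j, k⟩, a, b⟩ => (a, b, j / a, k / b)) ?_ ?_ ?_ ?_ fun _ _ => rfl
  · rintro ⟨a, b, x, y⟩ h
    simp only [mem_posSolutions] at h
    obtain ⟨ha, hb, hx, hy, rfl⟩ := h
    simp only [mem_sigma, HasAntidiagonal.mem_antidiagonal, mem_product, Nat.mem_divisors, true_and]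
    exact ⟨⟨dvd_mul_right a x, by positivity⟩, dvd_mul_right b y, by positivity⟩
  · rintro ⟨⟨j, k⟩, a, b⟩ h
    simp only [mem_sigma, HasAntidiagonal.mem_antidiagonal, mem_product, Nat.mem_divisors] at h
    obtain ⟨rfl, ⟨⟨x, rfl⟩, hj⟩, ⟨y, rfl⟩, hk⟩ := h
    simp only [mem_posSolutions]
    have ha : 0 < a := Nat.pos_of_ne_zero (left_ne_zero_of_mul hj)
    have hb : 0 < b := Nat.pos_of_ne_zero (left_ne_zero_of_mul hk)
    rw [Nat.mul_div_cancel_left x ha, Nat.mul_div_cancel_left y hb]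
    exact ⟨ha, hb, Nat.pos_of_ne_zero (right_ne_zero_of_mul hj),
      Nat.pos_of_ne_zero (right_ne_zero_of_mul hk), rfl⟩
  · rintro ⟨a, b, x, y⟩ h
    simp only [mem_posSolutions] at h
    simp [Nat.mul_div_cancel_left x h.1, Nat.mul_div_cancel_left y h.2.1]
  · rintro ⟨⟨j, k⟩, a, b⟩ h
    simp only [mem_sigma, HasAntidiagonal.mem_antidiagonal, mem_product, Nat.mem_divisors] at h
    simp [Nat.mul_div_cancel' h.2.1.1, Nat.mul_div_cancel' h.2.2.1]

lemma sum_filter_a_lt_b_swap (f : ℕ × ℕ × ℕ × ℕ → M) :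
    ∑ s ∈ (posSolutions n).filter (fun s => s.1 < s.2.1), f (s.2.1, s.1, s.2.2.2, s.2.2.1) =
      ∑ s ∈ (posSolutions n).filter (fun s => s.2.1 < s.1), f s := by
  refine sum_nbij' (fun ⟨a, b, x, y⟩ => (b, a, y, x)) (fun ⟨a, b, x, y⟩ => (b, a, y, x))
    ?_ ?_ (fun _ _ => rfl) (fun _ _ => rfl) fun _ _ => rfl <;>
  · rintro ⟨a, b, x, y⟩ h
    simp only [mem_filter, mem_posSolutions] at h ⊢
    omega

lemma sum_filter_b_lt_a_shear (f : ℕ × ℕ × ℕ × ℕ → M) :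
    ∑ s ∈ (posSolutions n).filter (fun s => s.2.1 < s.1),
        f (s.1 - s.2.1, s.2.1, s.2.2.1, s.2.2.1 + s.2.2.2) =
      ∑ s ∈ (posSolutions n).filter (fun s => s.2.2.1 < s.2.2.2), f s := by
  refine sum_nbij' (fun ⟨a, b, x, y⟩ => (a - b, b, x, x + y))
    (fun ⟨a, b, x, y⟩ => (a + b, b, x, y - x)) ?_ ?_ ?_ ?_ fun _ _ => rfl
  · rintro ⟨a, b, x, y⟩ h
    simp only [mem_filter, mem_posSolutions] at h ⊢
    obtain ⟨⟨ha, hb, hx, hy, rfl⟩, hba⟩ := h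
    refine ⟨⟨by omega, hb, hx, by omega, ?_⟩, by omega⟩
    zify [hba.le]
    ring
  · rintro ⟨a, b, x, y⟩ h
    simp only [mem_filter, mem_posSolutions] at h ⊢
    obtain ⟨⟨ha, hb, hx, hy, rfl⟩, hxy⟩ := h
    refine ⟨⟨by omega, hb, hx, by omega, ?_⟩, by omega⟩
    zify [hxy.le]
    ring
  all_goals
    rintro ⟨a, b, x, y⟩ h
    simp only [mem_filter, mem_posSolutions, Prod.mk.injEq, true_and] at h ⊢
    omega

lemma sum_filter_a_lt_b_shear (f : ℕ × ℕ × ℕ × ℕ → M) :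
    ∑ s ∈ (posSolutions n).filter (fun s => s.1 < s.2.1),
        f (s.1, s.2.1 - s.1, s.2.2.1 + s.2.2.2, s.2.2.2) =
      ∑ s ∈ (posSolutions n).filter (fun s => s.2.2.2 < s.2.2.1), f s := by
  refine sum_nbij' (fun ⟨a, b, x, y⟩ => (a, b - a, x + y, y))
    (fun ⟨a, b, x, y⟩ => (a, b + a, x - y, y)) ?_ ?_ ?_ ?_ fun _ _ => rfl
  · rintro ⟨a, b, x, y⟩ h
    simp only [mem_filter, mem_posSolutions] at h ⊢
    obtain ⟨⟨ha, hb, hx, hy, rfl⟩, hab⟩ := h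
    refine ⟨⟨ha, by omega, by omega, hy, ?_⟩, by omega⟩
    zify [hab.le]
    ring
  · rintro ⟨a, b, x, y⟩ h
    simp only [mem_filter, mem_posSolutions] at h ⊢
    obtain ⟨⟨ha, hb, hx, hy, rfl⟩, hyx⟩ := h
    refine ⟨⟨ha, by omega, by omega, hy, ?_⟩, by omega⟩
    zify [hyx.le]
    ring
  all_goals
    rintro ⟨a, b, x, y⟩ h
    simp only [mem_filter, mem_posSolutions, Prod.mk.injEq, true_and, and_true] at h ⊢
    omega

lemma sum_filter_a_eq_b (f : ℕ × ℕ × ℕ × ℕ → M) :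
    ∑ s ∈ (posSolutions n).filter (fun s => s.1 = s.2.1), f s =
      ∑ p ∈ n.divisorsAntidiagonal, ∑ x ∈ Ico 1 p.2, f (p.1, p.1, x, p.2 - x) := by
  rw [sum_sigma']
  refine sum_nbij' (fun ⟨a, _, x, y⟩ => ⟨(a, x + y), x⟩) (fun ⟨⟨d, e⟩, x⟩ => (d, d, x, e - x))
    ?_ ?_ ?_ ?_ ?_
  · rintro ⟨a, b, x, y⟩ h
    simp only [mem_filter, mem_posSolutions] at h
    obtain ⟨⟨ha, -, hx, hy, rfl⟩, rfl⟩ := h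
    simp only [mem_sigma, Nat.mem_divisorsAntidiagonal, mem_Ico]
    exact ⟨⟨mul_add a x y, by positivity⟩, hx, by omega⟩
  · rintro ⟨⟨d, e⟩, x⟩ h
    simp only [mem_sigma, Nat.mem_divisorsAntidiagonal, mem_Ico] at h
    obtain ⟨⟨rfl, hde⟩, hx, hxe⟩ := h
    simp only [mem_filter, mem_posSolutions, and_true]
    have hd : 0 < d := Nat.pos_of_ne_zero (left_ne_zero_of_mul hde)
    refine ⟨hd, hd, hx, by omega, ?_⟩
    rw [← mul_add, Nat.add_sub_cancel' hxe.le]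
  · rintro ⟨a, b, x, y⟩ h
    simp only [mem_filter, mem_posSolutions] at h
    obtain ⟨-, rfl⟩ := h
    simp only [Prod.mk.injEq, true_and]
    omega
  · rintro ⟨⟨d, e⟩, x⟩ h
    simp only [mem_sigma, Nat.mem_divisorsAntidiagonal, mem_Ico] at h
    simp only [Sigma.mk.injEq, Prod.mk.injEq, heq_eq_eq, true_and, and_true]
    omega
  · rintro ⟨a, b, x, y⟩ h
    simp only [mem_filter, mem_posSolutions] at h
    obtain ⟨-, rfl⟩ := h
    simp

lemma sum_filter_x_eq_y (f : ℕ × ℕ × ℕ × ℕ → M) :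
    ∑ s ∈ (posSolutions n).filter (fun s => s.2.2.1 = s.2.2.2), f s =
      ∑ p ∈ n.divisorsAntidiagonal, ∑ a ∈ Ico 1 p.2, f (a, p.2 - a, p.1, p.1) := by
  rw [← sum_filter_a_eq_b n fun s => f (s.2.2.1, s.2.2.2, s.1, s.2.1)]
  refine sum_nbij' (fun ⟨a, b, x, y⟩ => (x, y, a, b)) (fun ⟨a, b, x, y⟩ => (x, y, a, b))
    ?_ ?_ (fun _ _ => rfl) (fun _ _ => rfl) fun _ _ => rfl <;>
  · rintro ⟨a, b, x, y⟩ h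
    simp only [mem_filter, mem_posSolutions] at h ⊢
    obtain ⟨⟨ha, hb, hx, hy, rfl⟩, h⟩ := h
    exact ⟨⟨hx, hy, ha, hb, by ring⟩, h⟩

end Bijections

lemma sum_split_lt_eq_gt {ι α M : Type*} [LinearOrder α] [AddCommMonoid M] (s : Finset ι)
    (u v : ι → α) (f : ι → M) :
    ∑ i ∈ s, f i = ∑ i ∈ s.filter (fun i => u i < v i), f i +
      ∑ i ∈ s.filter (fun i => u i = v i), f i + ∑ i ∈ s.filter (fun i => v i < u i), f i := by
  rw [add_assoc, ← sum_filter_add_sum_filter_not s (fun i => u i < v i),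
    ← sum_filter_add_sum_filter_not (s.filter fun i => ¬u i < v i) (fun i => u i = v i),
    filter_filter, filter_filter]
  congr 3
  · exact filter_congr fun i _ => and_iff_right_of_imp fun h => h.not_lt
  · exact filter_congr fun i _ => by rw [not_lt, lt_iff_le_and_ne, ne_comm]

section Telescoping

variable {M : Type*} [AddCommGroup M] (n : ℕ)

theorem sum_posSolutions_of_telescoping (F H A : ℕ × ℕ × ℕ × ℕ → M)
    (hF_gt : ∀ a b x y, b < a →
      F (a, b, x, y) = H (a - b, b, x, x + y) - H (a, b, x, y) - A (a, b, x, y))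
    (hF_lt : ∀ a b x y, a < b →
      F (a, b, x, y) = H (a, b - a, x + y, y) - H (a, b, x, y) + A (b, a, y, x)) :
    ∑ s ∈ posSolutions n, F s =
      ∑ s ∈ (posSolutions n).filter (fun s => s.1 = s.2.1), (F s + H s) -
        ∑ s ∈ (posSolutions n).filter (fun s => s.2.2.1 = s.2.2.2), H s := by
  have h_gt : ∑ s ∈ (posSolutions n).filter (fun s => s.2.1 < s.1), F s =
      ∑ s ∈ (posSolutions n).filter (fun s => s.2.2.1 < s.2.2.2), H s -
        ∑ s ∈ (posSolutions n).filter (fun s => s.2.1 < s.1), H s -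
        ∑ s ∈ (posSolutions n).filter (fun s => s.2.1 < s.1), A s := by
    rw [← sum_filter_b_lt_a_shear, ← sum_sub_distrib, ← sum_sub_distrib]
    exact sum_congr rfl fun ⟨a, b, x, y⟩ h => hF_gt a b x y (mem_filter.1 h).2
  have h_lt : ∑ s ∈ (posSolutions n).filter (fun s => s.1 < s.2.1), F s =
      ∑ s ∈ (posSolutions n).filter (fun s => s.2.2.2 < s.2.2.1), H s -
        ∑ s ∈ (posSolutions n).filter (fun s => s.1 < s.2.1), H s +
        ∑ s ∈ (posSolutions n).filter (fun s => s.2.1 < s.1), A s := by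
    rw [← sum_filter_a_lt_b_shear, ← sum_filter_a_lt_b_swap, ← sum_sub_distrib, ← sum_add_distrib]
    exact sum_congr rfl fun ⟨a, b, x, y⟩ h => hF_lt a b x y (mem_filter.1 h).2
  have h_H := (sum_split_lt_eq_gt (posSolutions n) (fun s => s.1) (fun s => s.2.1) H).symm.trans
    (sum_split_lt_eq_gt (posSolutions n) (fun s => s.2.2.1) (fun s => s.2.2.2) H)
  rw [sum_split_lt_eq_gt (posSolutions n) (fun s => s.1) (fun s => s.2.1) F, h_gt, h_lt,
    sum_add_distrib]
  linear_combination (norm := module) -h_H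

end Telescoping

def chazyF : ℕ × ℕ × ℕ × ℕ → ℚ
  | (a, b, x, y) => 12 * a * b * ((a * x) ^ 2 + (b * y) ^ 2 - 3 * (a * x) * (b * y))

-- `chazyH` and `chazyA` are found by undetermined coefficients from `chazyF_of_gt`, `chazyF_of_lt`.
def chazyH : ℕ × ℕ × ℕ × ℕ → ℚ
  | (a, b, x, y) => -2 * b ^ 4 * y ^ 2 - 12 * a * b ^ 3 * y ^ 2 + 16 * a * b ^ 3 * x * y
      - 12 * a ^ 2 * b ^ 2 * y ^ 2 + 18 * a ^ 2 * b ^ 2 * x * y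

def chazyA : ℕ × ℕ × ℕ × ℕ → ℚ
  | (a, b, x, y) => -2 * b ^ 4 * x * y - 8 * a * b ^ 3 * x ^ 2 - 12 * a * b ^ 3 * x * y
      + 12 * a * b ^ 3 * y ^ 2 + 6 * a ^ 2 * b ^ 2 * x ^ 2 + 12 * a ^ 2 * b ^ 2 * x * y
      - 12 * a ^ 3 * b * x ^ 2

lemma chazyF_of_gt (a b x y : ℕ) (h : b < a) :
    chazyF (a, b, x, y) =
      chazyH (a - b, b, x, x + y) - chazyH (a, b, x, y) - chazyA (a, b, x, y) := by
  simp only [chazyF, chazyH, chazyA]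
  push_cast [h.le]
  ring

lemma chazyF_of_lt (a b x y : ℕ) (h : a < b) :
    chazyF (a, b, x, y) =
      chazyH (a, b - a, x + y, y) - chazyH (a, b, x, y) + chazyA (b, a, y, x) := by
  simp only [chazyF, chazyH, chazyA]
  push_cast [h.le]
  ring

lemma sum_Ico_one_cubic {e : ℕ} (he : 0 < e) (c₀ c₁ c₂ c₃ : ℚ) :
    ∑ x ∈ Ico 1 e, (c₀ + c₁ * x + c₂ * x ^ 2 + c₃ * x ^ 3) =
      c₀ * (e - 1) + c₁ * (e * (e - 1) / 2) + c₂ * ((e - 1) * e * (2 * e - 1) / 6) +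
        c₃ * (e * (e - 1) / 2) ^ 2 := by
  induction e, he using Nat.le_induction with
  | base => simp
  | succ e he ih =>
    rw [sum_Ico_succ_top he, ih]
    push_cast
    ring

lemma sum_a_eq_b_chazy {d e : ℕ} (he : 0 < e) :
    ∑ x ∈ Ico 1 e, (chazyF (d, d, x, e - x) + chazyH (d, d, x, e - x)) =
      (d : ℚ) ^ 4 * e ^ 2 - d ^ 4 * e ^ 3 := by
  calc ∑ x ∈ Ico 1 e, (chazyF (d, d, x, e - x) + chazyH (d, d, x, e - x))
      = ∑ x ∈ Ico 1 e, (-14 * d ^ 4 * e ^ 2 + 26 * d ^ 4 * e * x + 0 * x ^ 2 + 0 * x ^ 3 : ℚ) :=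
        sum_congr rfl fun x hx => by
          simp only [chazyF, chazyH]
          push_cast [(mem_Ico.1 hx).2.le]
          ring
    _ = (d : ℚ) ^ 4 * e ^ 2 - d ^ 4 * e ^ 3 := by
        rw [sum_Ico_one_cubic he]
        ring

lemma sum_x_eq_y_chazy {d e : ℕ} (he : 0 < e) :
    ∑ a ∈ Ico 1 e, chazyH (a, e - a, d, d) = (d : ℚ) ^ 2 * e ^ 4 - d ^ 2 * e ^ 3 := by
  calc ∑ a ∈ Ico 1 e, chazyH (a, e - a, d, d)
      = ∑ a ∈ Ico 1 e, (-2 * d ^ 2 * e ^ 4 + 12 * d ^ 2 * e ^ 3 * a + -18 * d ^ 2 * e ^ 2 * a ^ 2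
          + 8 * d ^ 2 * e * a ^ 3 : ℚ) :=
        sum_congr rfl fun a ha => by
          simp only [chazyH]
          push_cast [(mem_Ico.1 ha).2.le]
          ring
    _ = (d : ℚ) ^ 2 * e ^ 4 - d ^ 2 * e ^ 3 := by
        rw [sum_Ico_one_cubic he]
        ring

lemma sum_divisorsAntidiagonal_snd {M : Type*} [AddCommMonoid M] (n : ℕ) (f : ℕ → M) :
    ∑ p ∈ n.divisorsAntidiagonal, f p.2 = ∑ p ∈ n.divisorsAntidiagonal, f p.1 := by
  rw [Nat.sum_divisorsAntidiagonal' fun _ e => f e, Nat.sum_divisorsAntidiagonal fun d _ => f d]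

theorem sum_posSolutions_chazyF (n : ℕ) :
    ∑ s ∈ posSolutions n, chazyF s = (n : ℚ) ^ 2 * (1 - n) * σ 1 n := by
  rw [sum_posSolutions_of_telescoping n chazyF chazyH chazyA chazyF_of_gt chazyF_of_lt,
    sum_filter_a_eq_b, sum_filter_x_eq_y, ← sum_sub_distrib]
  calc ∑ p ∈ n.divisorsAntidiagonal, (∑ x ∈ Ico 1 p.2,
        (chazyF (p.1, p.1, x, p.2 - x) + chazyH (p.1, p.1, x, p.2 - x)) -
        ∑ a ∈ Ico 1 p.2, chazyH (a, p.2 - a, p.1, p.1))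
      = ∑ p ∈ n.divisorsAntidiagonal,
          ((n : ℚ) ^ 2 * p.1 ^ 2 - n ^ 2 * p.2 ^ 2 - n ^ 3 * p.1 + n ^ 2 * p.2) :=
        sum_congr rfl fun p hp => by
          obtain ⟨hn, hn0⟩ := Nat.mem_divisorsAntidiagonal.1 hp
          have he : 0 < p.2 := Nat.pos_of_ne_zero (right_ne_zero_of_mul (hn ▸ hn0))
          rw [sum_a_eq_b_chazy he, sum_x_eq_y_chazy he, ← hn]
          push_cast
          ring
    _ = n ^ 2 * (1 - n) * σ 1 n := by
        simp only [sum_add_distrib, sum_sub_distrib, ← mul_sum]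
        rw [sum_divisorsAntidiagonal_snd n fun e => (e : ℚ) ^ 2,
          sum_divisorsAntidiagonal_snd n fun e => (e : ℚ),
          Nat.sum_divisorsAntidiagonal fun d _ => (d : ℚ), sigma_one_apply]
        push_cast
        ring

theorem sum_antidiagonal_sigma_mul_sigma (n : ℕ) :
    12 * ∑ p ∈ antidiagonal n, (σ 1 p.1 : ℚ) * σ 1 p.2 * (p.1 ^ 2 + p.2 ^ 2 - 3 * p.1 * p.2) =
      (n : ℚ) ^ 2 * (1 - n) * σ 1 n := by
  rw [← sum_posSolutions_chazyF, mul_sum]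
  calc ∑ p ∈ antidiagonal n, 12 * ((σ 1 p.1 : ℚ) * σ 1 p.2 * (p.1 ^ 2 + p.2 ^ 2 - 3 * p.1 * p.2))
      = ∑ p ∈ antidiagonal n, ∑ a ∈ p.1.divisors, ∑ b ∈ p.2.divisors,
          (12 * a * b * (p.1 ^ 2 + p.2 ^ 2 - 3 * p.1 * p.2) : ℚ) :=
        sum_congr rfl fun p _ => by
          rw [sigma_one_apply, sigma_one_apply, Nat.cast_sum, Nat.cast_sum, sum_mul_sum, sum_mul,
            mul_sum]
          exact sum_congr rfl fun a _ => by
            rw [sum_mul, mul_sum]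
            exact sum_congr rfl fun b _ => by ring
    _ = ∑ s ∈ posSolutions n, chazyF s := by
        rw [← sum_posSolutions_eq_sum_antidiagonal_divisors n
          fun a b j k => (12 * a * b * (j ^ 2 + k ^ 2 - 3 * j * k) : ℚ)]
        exact sum_congr rfl fun ⟨a, b, x, y⟩ _ => by simp only [chazyF]; push_cast; ring

end EisensteinChazy

lemma Dq_eq_derivation (f : ℚ⟦X⟧) : Dq f = ((X : ℚ⟦X⟧) • derivative ℚ) f := rfl

lemma Dq_smul (c : ℚ) (f : ℚ⟦X⟧) : Dq (c • f) = c • Dq f := by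
  simp only [Dq_eq_derivation, Derivation.map_smul]

lemma Dq_one_sub_smul (c : ℚ) (f : ℚ⟦X⟧) : Dq (1 - c • f) = -c • Dq f := by
  simp only [Dq_eq_derivation, map_sub, Derivation.map_one_eq_zero, Derivation.map_smul, zero_sub,
    neg_smul]

lemma coeff_Dq (f : ℚ⟦X⟧) (n : ℕ) : coeff n (Dq f) = n * coeff n f := by
  cases n with
  | zero => simp [Dq_eq_derivation]
  | succ n => rw [Dq_eq_derivation, Derivation.smul_apply, smul_eq_mul, coeff_succ_X_mul,
      coeff_derivative, Nat.cast_succ, mul_comm]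

noncomputable def sigmaSeries : ℚ⟦X⟧ := mk fun n => (σ 1 n : ℚ)

theorem Dq_sigmaSeries_chazy :
    Dq (Dq (Dq sigmaSeries)) = Dq (Dq sigmaSeries) - (24 : ℚ) • (sigmaSeries * Dq (Dq sigmaSeries)) +
      (36 : ℚ) • Dq sigmaSeries ^ 2 := by
  ext n
  have h_mul : coeff n (sigmaSeries * Dq (Dq sigmaSeries)) =
      ∑ p ∈ antidiagonal n, (σ 1 p.1 : ℚ) * σ 1 p.2 * p.2 ^ 2 := by
    simp only [coeff_mul, coeff_Dq, sigmaSeries, coeff_mk]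
    exact sum_congr rfl fun _ _ => by ring
  have h_sq : coeff n (Dq sigmaSeries ^ 2) =
      ∑ p ∈ antidiagonal n, (σ 1 p.1 : ℚ) * σ 1 p.2 * (p.1 * p.2) := by
    simp only [sq, coeff_mul, coeff_Dq, sigmaSeries, coeff_mk]
    exact sum_congr rfl fun _ _ => by ring
  have h_swap : ∑ p ∈ antidiagonal n, (σ 1 p.1 : ℚ) * σ 1 p.2 * p.1 ^ 2 =
      ∑ p ∈ antidiagonal n, (σ 1 p.1 : ℚ) * σ 1 p.2 * p.2 ^ 2 := by
    rw [← Nat.sum_antidiagonal_swap]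
    exact sum_congr rfl fun p _ => by simp only [Prod.fst_swap, Prod.snd_swap]; ring
  have h_split : ∑ p ∈ antidiagonal n,
        (σ 1 p.1 : ℚ) * σ 1 p.2 * (p.1 ^ 2 + p.2 ^ 2 - 3 * p.1 * p.2) =
      ∑ p ∈ antidiagonal n, (σ 1 p.1 : ℚ) * σ 1 p.2 * p.1 ^ 2 +
        ∑ p ∈ antidiagonal n, (σ 1 p.1 : ℚ) * σ 1 p.2 * p.2 ^ 2 -
        3 * ∑ p ∈ antidiagonal n, (σ 1 p.1 : ℚ) * σ 1 p.2 * (p.1 * p.2) := by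
    rw [mul_sum, ← sum_add_distrib, ← sum_sub_distrib]
    exact sum_congr rfl fun _ _ => by ring
  have h_conv := EisensteinChazy.sum_antidiagonal_sigma_mul_sigma n
  rw [h_split, h_swap] at h_conv
  rw [map_add, map_sub, map_smul, map_smul, h_mul, h_sq]
  simp only [coeff_Dq, sigmaSeries, coeff_mk, smul_eq_mul]
  linear_combination h_conv

theorem eisenstein_chazy :
    let P : PowerSeries ℚ := PowerSeries.mk fun n =>
      if n = 0 then 1 else -24 * (∑ d ∈ n.divisors, (d : ℚ))
    Dq (Dq (Dq P)) = P * Dq (Dq P) - ((3/2 : ℚ) • (Dq P)^2) := by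
  intro P
  have hP : P = 1 - (24 : ℚ) • sigmaSeries := by
    ext (_ | n) <;> simp [P, sigmaSeries, sigma_one_apply]
  rw [hP, Dq_one_sub_smul, Dq_smul, Dq_smul]
  simp only [sub_mul, one_mul, smul_mul_assoc, mul_smul_comm, smul_pow]
  linear_combination (norm := module) (-24 : ℚ) • Dq_sigmaSeries_chazy
end
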